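/- Let d ≥ 9 be an integer such that every P5-free graph G with ω(G) ≥ 2 contains either: (i) a complete pair (X,Y) with ρ(X) ≥ y^9·ρ(G) and ρ(Y) ≥ (1−3y)·ρ(G) for some real y with 0 < y ≤ 1/4; or (ii) a complete blockade (B_1,…,B_k) for some integer k ≥ 2 such that ρ(B_i) ≥ k^{−d}·ρ(G) for all i ∈ [k]. Then every P5-free graph G satisfies α(G)·ω(G)^d ≥ |G|. -/

import Mathlib

open SimpleGraph

/-- The five-vertex path `P₅`. -/
def P5 : SimpleGraph (Fin 5) := SimpleGraph.fromRel (fun i j => (i : ℕ) + 1 = (j : ℕ))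

/-- A graph is `P₅`-free if it contains no induced copy of `P5`
(equivalently, no graph embedding of `P5`). -/
def P5Free {V : Type*} (G : SimpleGraph V) : Prop := IsEmpty (P5 ↪g G)

/-- A graph is `T`-free if it contains no induced copy of `T`. -/
def TFree {W V : Type*} (T : SimpleGraph W) (G : SimpleGraph V) : Prop := IsEmpty (T ↪g G)

/-- A stable (independent) set of vertices. -/
def IsStableSet {V : Type*} (G : SimpleGraph V) (s : Finset V) : Prop :=
  ∀ ⦃u⦄, u ∈ s → ∀ ⦃v⦄, v ∈ s → ¬ G.Adj u v

/-- The stability number `α(G)`. -/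
noncomputable def alphaNum {V : Type*} [Fintype V] (G : SimpleGraph V) : ℕ :=
  sSup {n | ∃ s : Finset V, IsStableSet G s ∧ s.card = n}

/-- The clique number `ω(G)`. -/
noncomputable def omegaNum {V : Type*} [Fintype V] (G : SimpleGraph V) : ℕ :=
  sSup {n | ∃ s : Finset V, G.IsClique (s : Set V) ∧ s.card = n}

/-- `ψ(G) = |G| / α(G)` (and `0` for the null graph). -/
noncomputable def psi {V : Type*} [Fintype V] (G : SimpleGraph V) : ℝ :=
  if Fintype.card V = 0 then 0 else (Fintype.card V : ℝ) / (alphaNum G : ℝ)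

/-- `ψ(S)` for a vertex subset `S`, i.e. `ψ(G[S])`. -/
noncomputable def psiSub {V : Type*} [Fintype V] (G : SimpleGraph V) (s : Finset V) : ℝ :=
  psi (G.induce (↑s : Set V))

/-- The Hall ratio `ρ(G)`: the maximum of `ψ(F)` over induced subgraphs `F` of `G`. -/
noncomputable def rho {V : Type*} [Fintype V] (G : SimpleGraph V) : ℝ :=
  ⨆ s : Finset V, psiSub G s

/-- `ρ(S)` for a vertex subset `S`, i.e. `ρ(G[S])`. -/
noncomputable def rhoSub {V : Type*} [Fintype V] (G : SimpleGraph V) (s : Finset V) : ℝ :=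
  rho (G.induce (↑s : Set V))

/-- `(A, B)` is a complete pair: disjoint, with every vertex of `A` adjacent to every
vertex of `B`. -/
def CompletePair {V : Type*} (G : SimpleGraph V) (A B : Finset V) : Prop :=
  Disjoint A B ∧ ∀ a ∈ A, ∀ b ∈ B, G.Adj a b

/-- `(A, B)` is an anticomplete pair: disjoint, with no edges between `A` and `B`. -/
def AnticompletePair {V : Type*} (G : SimpleGraph V) (A B : Finset V) : Prop :=
  Disjoint A B ∧ ∀ a ∈ A, ∀ b ∈ B, ¬ G.Adj a b

/-- A complete blockade: pairwise disjoint sets, pairwise complete to each other. -/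
def CompleteBlockade {V : Type*} (G : SimpleGraph V) {k : ℕ} (B : Fin k → Finset V) : Prop :=
  (∀ i j, i ≠ j → Disjoint (B i) (B j)) ∧
  (∀ i j, i ≠ j → ∀ a ∈ B i, ∀ b ∈ B j, G.Adj a b)

/-- An anticomplete blockade: pairwise disjoint sets, pairwise anticomplete to each other. -/
def AnticompleteBlockade {V : Type*} (G : SimpleGraph V) {k : ℕ} (B : Fin k → Finset V) : Prop :=
  (∀ i j, i ≠ j → Disjoint (B i) (B j)) ∧
  (∀ i j, i ≠ j → ∀ a ∈ B i, ∀ b ∈ B j, ¬ G.Adj a b)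

/-- The fractional chromatic number `χ*(G)`: the least `q ≥ 0` for which there are
nonnegative weights on the stable sets summing to `q` that cover every vertex with
total weight at least `1`. -/
noncomputable def fracChrom {V : Type*} [Fintype V] [DecidableEq V] (G : SimpleGraph V) : ℝ :=
  sInf {q : ℝ | 0 ≤ q ∧ ∃ x : Finset V → ℝ,
    (∀ s, 0 ≤ x s) ∧ (∀ s, ¬ IsStableSet G s → x s = 0) ∧
    (∑ s : Finset V, x s) = q ∧
    ∀ v : V, 1 ≤ ∑ s ∈ Finset.univ.filter (fun s : Finset V => v ∈ s), x s}

/-- `G` is `ε`-sparse: every vertex has degree at most `ε·|G|`. -/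
def EpsSparse {V : Type*} [Fintype V] (ε : ℝ) (G : SimpleGraph V) : Prop :=
  ∀ v : V, ((G.neighborSet v).ncard : ℝ) ≤ ε * (Fintype.card V : ℝ)

/-- `G` is `(1-ε)`-dense: the complement of `G` is `ε`-sparse. -/
def OneSubEpsDense {V : Type*} [Fintype V] (ε : ℝ) (G : SimpleGraph V) : Prop :=
  EpsSparse ε Gᶜ

/-- `G` is `ε`-restricted: `ε`-sparse or `(1-ε)`-dense. -/
def EpsRestricted {V : Type*} [Fintype V] (ε : ℝ) (G : SimpleGraph V) : Prop :=
  EpsSparse ε G ∨ OneSubEpsDense ε G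

/-- `G` is `(p,q)`-sparse: every induced subgraph `F` with `ρ(F) ≥ q` contains an
anticomplete pair `(X,Y)` with `ρ(X), ρ(Y) ≥ p`. -/
def PQSparse {V : Type*} [Fintype V] (G : SimpleGraph V) (p q : ℝ) : Prop :=
  ∀ s : Finset V, q ≤ rhoSub G s →
    ∃ X Y : Finset V, X ⊆ s ∧ Y ⊆ s ∧ AnticompletePair G X Y ∧
      p ≤ rhoSub G X ∧ p ≤ rhoSub G Y

/-- `φ_s = ∏_{i=1}^{s} (1 - 2^{-2^{i+1}})` (so `φ_0 = 1`). -/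
noncomputable def phi (s : ℕ) : ℝ :=
  ∏ i ∈ Finset.Icc 1 s, (1 - ((2:ℝ) ^ (2 ^ (i+1)))⁻¹)

/-- `φ_{r,s} = φ_s / φ_r`. -/
noncomputable def phiRS (r s : ℕ) : ℝ := phi s / phi r


open Finset

/-!
By induction on `|G|` we show `ρ(G) ≤ ω(G)^d`; this suffices since `|G| = α(G) ψ(G) ≤ α(G) ρ(G)`.
If `ω(G) ≤ 1` then `G` is edgeless and `ρ(G) ≤ 1`. Otherwise the sides of the complete pair, or the
blocks of the complete blockade, are proper induced subgraphs whose clique numbers add up to at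
most `ω(G)`, since cliques in pairwise complete sets combine into one clique. In a blockade the
smallest block has clique number at most `ω(G)/k`. For a pair with clique numbers `a + b ≤ ω`, put
`t = a/ω`: either `t^d ≤ t^9 ≤ y^9`, or `t > y` and `b^d ≤ (1 - t)^9 ω^d ≤ (1 - 3y) ω^d`, by
`(1 - t)^9 ≤ 1 - 3t` on `[0, 1/4]`.
-/

lemma one_sub_pow_nine_le {t : ℝ} (h0 : 0 ≤ t) (h1 : t ≤ 1 / 4) : (1 - t) ^ 9 ≤ 1 - 3 * t := by
  -- square three times, absorbing the quadratic term with `t ≤ 1/4` each time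
  have hu : 0 ≤ 1 - t := by linarith
  have h2 : (1 - t) ^ 2 ≤ 1 - 7 / 4 * t := by nlinarith
  have h4 : (1 - t) ^ 4 ≤ 1 - 175 / 64 * t := by nlinarith [pow_nonneg hu 2]
  have h8 : (1 - t) ^ 8 ≤ 1 - 3 * t := by nlinarith [pow_nonneg hu 4]
  nlinarith [pow_nonneg hu 8]

lemma pow_le_or_pow_le_of_add_le_one {d : ℕ} (hd : 9 ≤ d) {t u y : ℝ} (ht : 0 ≤ t) (hu : 0 ≤ u)
    (htu : t + u ≤ 1) (hy : y ≤ 1 / 4) : t ^ d ≤ y ^ 9 ∨ u ^ d ≤ 1 - 3 * y := by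
  rcases le_or_gt t y with hty | hyt
  · left
    calc t ^ d ≤ t ^ 9 := pow_le_pow_of_le_one ht (by linarith) hd
      _ ≤ y ^ 9 := pow_le_pow_left₀ ht hty 9
  · right
    set s := min t (1 / 4)
    have hs0 : 0 ≤ s := le_min ht (by norm_num)
    calc u ^ d ≤ u ^ 9 := pow_le_pow_of_le_one hu (by linarith) hd
      _ ≤ (1 - s) ^ 9 := pow_le_pow_left₀ hu (by linarith [min_le_left t (1 / 4)]) 9
      _ ≤ 1 - 3 * s := one_sub_pow_nine_le hs0 (min_le_right _ _)
      _ ≤ 1 - 3 * y := by linarith [le_min hyt.le hy]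

lemma le_pow_of_add_le {d : ℕ} (hd : 9 ≤ d) {a b w r y : ℝ} (ha : 0 ≤ a) (hb : 0 ≤ b)
    (hab : a + b ≤ w) (hy0 : 0 < y) (hy : y ≤ 1 / 4)
    (hra : y ^ 9 * r ≤ a ^ d) (hrb : (1 - 3 * y) * r ≤ b ^ d) : r ≤ w ^ d := by
  have hd0 : d ≠ 0 := by omega
  rcases (add_nonneg ha hb |>.trans hab).eq_or_lt with hw | hw
  · have ha0 : a = 0 := by linarith
    rw [ha0, zero_pow hd0] at hra
    rw [← hw, zero_pow hd0]
    exact nonpos_of_mul_nonpos_right hra (by positivity)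
  have hwd : 0 < w ^ d := by positivity
  have hscale : ∀ x : ℝ, x ^ d = (x / w) ^ d * w ^ d := fun x => by
    rw [← mul_pow, div_mul_cancel₀ x hw.ne']
  rcases pow_le_or_pow_le_of_add_le_one hd (div_nonneg ha hw.le) (div_nonneg hb hw.le)
    (by rw [← add_div, div_le_one hw]; exact hab) hy with h | h
  · refine le_of_mul_le_mul_left ?_ (pow_pos hy0 9)
    calc y ^ 9 * r ≤ (a / w) ^ d * w ^ d := hscale a ▸ hra
      _ ≤ y ^ 9 * w ^ d := mul_le_mul_of_nonneg_right h hwd.le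
  · refine le_of_mul_le_mul_left ?_ (by linarith : (0 : ℝ) < 1 - 3 * y)
    calc (1 - 3 * y) * r ≤ (b / w) ^ d * w ^ d := hscale b ▸ hrb
      _ ≤ (1 - 3 * y) * w ^ d := mul_le_mul_of_nonneg_right h hwd.le

lemma le_pow_of_sum_le {k d w : ℕ} (hk : 0 < k) {a : Fin k → ℕ} (hsum : ∑ i, a i ≤ w) {r : ℝ}
    (hr : ∀ i, ((k : ℝ) ^ d)⁻¹ * r ≤ (a i : ℝ) ^ d) : r ≤ (w : ℝ) ^ d := by
  obtain ⟨i, -, hi⟩ := exists_min_image univ a (univ_nonempty_iff.2 ⟨⟨0, hk⟩⟩)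
  have hki : k * a i ≤ w := by
    simpa using (card_nsmul_le_sum univ a (a i) fun j _ => hi j (mem_univ j)).trans hsum
  calc r ≤ (k : ℝ) ^ d * (a i : ℝ) ^ d := by
        rw [← inv_mul_le_iff₀ (by positivity)]; exact hr i
    _ = ((k * a i : ℕ) : ℝ) ^ d := by push_cast; rw [mul_pow]
    _ ≤ (w : ℝ) ^ d := by gcongr

section Invariants

variable {V : Type*} {G : SimpleGraph V}

lemma isStableSet_iff {s : Finset V} : IsStableSet G s ↔ G.IsIndepSet s :=
  ⟨fun h _ hu _ hv _ => h hu hv, fun h _ hu _ hv huv => h hu hv (G.ne_of_adj huv) huv⟩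

lemma omegaNum_eq_cliqueNum [Fintype V] : omegaNum G = G.cliqueNum := by
  simp only [omegaNum, cliqueNum, isNClique_iff]

lemma exists_isNClique_omegaNum_induce (s : Finset V) :
    ∃ c ⊆ s, G.IsNClique (omegaNum (G.induce (s : Set V))) c := by
  obtain ⟨t, ht⟩ := (G.induce (s : Set V)).exists_isNClique_cliqueNum
  refine ⟨t.map (.subtype _), fun v hv => ?_, ?_⟩
  · obtain ⟨⟨v, hvs⟩, -, rfl⟩ := mem_map.1 hv
    exact hvs
  · rw [omegaNum_eq_cliqueNum]
    exact (isNClique_induce_iff _ _ _).1 ht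

variable [Fintype V]

lemma alphaNum_eq_indepNum : alphaNum G = G.indepNum := by
  simp only [alphaNum, indepNum, isNIndepSet_iff, isStableSet_iff]

lemma le_omegaNum {s : Finset V} (hs : G.IsClique (s : Set V)) : #s ≤ omegaNum G :=
  omegaNum_eq_cliqueNum (G := G) ▸ hs.card_le_cliqueNum

lemma alphaNum_induce_le (s : Finset V) : alphaNum (G.induce (s : Set V)) ≤ alphaNum G := by
  have : (G.induce (s : Set V))ᶜ = Gᶜ.induce s := by
    ext u v
    simp only [compl_adj, comap_adj, Function.Embedding.subtype_apply, ne_eq, Subtype.ext_iff]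
  simp only [alphaNum_eq_indepNum, ← cliqueNum_compl, this]
  exact cliqueNum_induce_le _

lemma card_le_alphaNum_mul_psi : (Fintype.card V : ℝ) ≤ alphaNum G * psi G := by
  rcases isEmpty_or_nonempty V with _ | ⟨⟨v⟩⟩
  · simp [psi]
  have hα : (0 : ℝ) < alphaNum G := by
    have := IsIndepSet.card_le_indepNum (G := G) (t := {v}) (by simp)
    rw [← alphaNum_eq_indepNum, card_singleton] at this
    exact_mod_cast this
  rw [psi, if_neg (Fintype.card_pos_iff.2 ⟨v⟩).ne', mul_div_cancel₀ _ hα.ne']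

lemma psi_nonneg : 0 ≤ psi G := by
  unfold psi
  split_ifs <;> positivity

lemma psi_le_one_of_forall_not_adj (h : ∀ u v, ¬ G.Adj u v) : psi G ≤ 1 := by
  have hV : #(univ : Finset V) ≤ alphaNum G := by
    rw [alphaNum_eq_indepNum]
    exact IsIndepSet.card_le_indepNum fun u _ v _ _ => h u v
  unfold psi
  split_ifs
  · exact zero_le_one
  · exact div_le_one_of_le₀ (by exact_mod_cast hV) (Nat.cast_nonneg _)

lemma psiSub_le_rho (s : Finset V) : psiSub G s ≤ rho G :=
  le_ciSup (Set.finite_range _).bddAbove s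

lemma rho_of_isEmpty [IsEmpty V] : rho G = 0 := by
  simp [rho, psiSub, psi]

lemma rhoSub_empty : rhoSub G ∅ = 0 := by
  have : IsEmpty ((∅ : Finset V) : Set V) := by simp
  exact rho_of_isEmpty

lemma card_le_alphaNum_mul_rho : (Fintype.card V : ℝ) ≤ alphaNum G * rho G := by
  have hcard : Fintype.card ((univ : Finset V) : Set V) = Fintype.card V := by simp
  calc (Fintype.card V : ℝ) ≤ alphaNum (G.induce ((univ : Finset V) : Set V)) * psiSub G univ :=
        hcard ▸ card_le_alphaNum_mul_psi
    _ ≤ alphaNum G * rho G := by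
        gcongr
        exacts [psi_nonneg, alphaNum_induce_le univ, psiSub_le_rho univ]

lemma rho_le_one_of_omegaNum_le_one (h : omegaNum G ≤ 1) : rho G ≤ 1 := by
  classical
  have hG : ∀ u v, ¬ G.Adj u v := fun u v huv => by
    have := le_omegaNum (G := G) (s := {u, v}) (by simpa using fun _ => huv)
    rw [card_pair (G.ne_of_adj huv)] at this
    omega
  exact ciSup_le fun s => psi_le_one_of_forall_not_adj fun u v => hG u v

end Invariants

section Blockades

variable {V : Type*} {G : SimpleGraph V}

lemma CompleteBlockade.sum_omegaNum_induce_le [Fintype V] {k : ℕ} {B : Fin k → Finset V}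
    (hB : CompleteBlockade G B) : ∑ i, omegaNum (G.induce (B i : Set V)) ≤ omegaNum G := by
  classical
  choose c hcB hc using fun i => exists_isNClique_omegaNum_induce (G := G) (B i)
  have hdisj : ((univ : Finset (Fin k)) : Set (Fin k)).PairwiseDisjoint c :=
    fun i _ j _ hij => (hB.1 i j hij).mono (hcB i) (hcB j)
  have hclique : G.IsClique (univ.biUnion c : Set V) := by
    intro u hu v hv huv
    simp only [coe_biUnion, coe_univ, Set.mem_univ, Set.iUnion_true, Set.mem_iUnion,
      mem_coe] at hu hv
    obtain ⟨i, hu⟩ := hu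
    obtain ⟨j, hv⟩ := hv
    by_cases hij : i = j
    · subst hij
      exact (hc i).isClique hu hv huv
    · exact hB.2 i j hij u (hcB i hu) v (hcB j hv)
  calc ∑ i, omegaNum (G.induce (B i : Set V)) = ∑ i, #(c i) := by simp only [(hc _).card_eq]
    _ = #(univ.biUnion c) := (card_biUnion hdisj).symm
    _ ≤ omegaNum G := le_omegaNum hclique

lemma CompletePair.completeBlockade {X Y : Finset V} (h : CompletePair G X Y) :
    CompleteBlockade G ![X, Y] := by
  obtain ⟨hdisj, hadj⟩ := h
  have hadj' : ∀ b ∈ Y, ∀ a ∈ X, G.Adj b a := fun b hb a ha => (hadj a ha b hb).symm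
  refine ⟨fun i j hij => ?_, fun i j hij => ?_⟩ <;> fin_cases i <;> fin_cases j <;>
    simp_all [disjoint_comm]

lemma CompletePair.omegaNum_induce_add_le [Fintype V] {X Y : Finset V} (h : CompletePair G X Y) :
    omegaNum (G.induce (X : Set V)) + omegaNum (G.induce (Y : Set V)) ≤ omegaNum G := by
  convert h.completeBlockade.sum_omegaNum_induce_le using 1
  simp only [Fin.sum_univ_two, Matrix.cons_val_zero, Matrix.cons_val_one]
  congr!

end Blockades

def HasCompleteSplit {V : Type*} [Fintype V] (d : ℕ) (G : SimpleGraph V) : Prop :=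
  (∃ (X Y : Finset V) (y : ℝ), 0 < y ∧ y ≤ 1 / 4 ∧ CompletePair G X Y ∧
    y ^ 9 * rho G ≤ rhoSub G X ∧ (1 - 3 * y) * rho G ≤ rhoSub G Y) ∨
  (∃ (k : ℕ) (B : Fin k → Finset V), 2 ≤ k ∧ CompleteBlockade G B ∧
    ∀ i, ((k : ℝ) ^ d)⁻¹ * rho G ≤ rhoSub G (B i))

section Induction

variable {V : Type*} [Fintype V] {G : SimpleGraph V} {d : ℕ}

lemma nonempty_of_mul_rho_le_rhoSub {c : ℝ} {s : Finset V} (hc : 0 < c) (hρ : 0 < rho G)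
    (h : c * rho G ≤ rhoSub G s) : s.Nonempty := by
  rw [nonempty_iff_ne_empty]
  rintro rfl
  rw [rhoSub_empty] at h
  exact h.not_gt (mul_pos hc hρ)

lemma card_lt_of_disjoint {s t : Finset V} (hst : Disjoint s t) (ht : t.Nonempty) :
    #s < Fintype.card V := by
  obtain ⟨v, hv⟩ := ht
  exact card_lt_univ_of_notMem (disjoint_right.1 hst hv)

lemma CompletePair.rho_le_omegaNum_pow {X Y : Finset V} (hXY : CompletePair G X Y)
    (hih : ∀ s : Finset V, #s < Fintype.card V →
      rhoSub G s ≤ (omegaNum (G.induce (s : Set V)) : ℝ) ^ d) (hd : 9 ≤ d)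
    {y : ℝ} (hy0 : 0 < y) (hy : y ≤ 1 / 4) (hρ : 0 < rho G)
    (hX : y ^ 9 * rho G ≤ rhoSub G X) (hY : (1 - 3 * y) * rho G ≤ rhoSub G Y) :
    rho G ≤ (omegaNum G : ℝ) ^ d := by
  have hXne := nonempty_of_mul_rho_le_rhoSub (by positivity) hρ hX
  have hYne := nonempty_of_mul_rho_le_rhoSub (by linarith) hρ hY
  exact le_pow_of_add_le hd (Nat.cast_nonneg _) (Nat.cast_nonneg _)
    (by exact_mod_cast hXY.omegaNum_induce_add_le) hy0 hy
    (hX.trans (hih X (card_lt_of_disjoint hXY.1 hYne)))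
    (hY.trans (hih Y (card_lt_of_disjoint hXY.1.symm hXne)))

lemma CompleteBlockade.rho_le_omegaNum_pow {k : ℕ} {B : Fin k → Finset V}
    (hB : CompleteBlockade G B)
    (hih : ∀ s : Finset V, #s < Fintype.card V →
      rhoSub G s ≤ (omegaNum (G.induce (s : Set V)) : ℝ) ^ d)
    (hk : 2 ≤ k) (hρ : 0 < rho G)
    (hBρ : ∀ i, ((k : ℝ) ^ d)⁻¹ * rho G ≤ rhoSub G (B i)) : rho G ≤ (omegaNum G : ℝ) ^ d := by
  have : Nontrivial (Fin k) := Fin.nontrivial_iff_two_le.2 hk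
  have hlt : ∀ i, #(B i) < Fintype.card V := fun i => by
    obtain ⟨j, hji⟩ := exists_ne i
    exact card_lt_of_disjoint (hB.1 i j hji.symm)
      (nonempty_of_mul_rho_le_rhoSub (by positivity) hρ (hBρ j))
  exact le_pow_of_sum_le (by omega) hB.sum_omegaNum_induce_le
    fun i => (hBρ i).trans (hih _ (hlt i))

lemma rho_le_omegaNum_pow_of_hasCompleteSplit
    (hih : ∀ s : Finset V, #s < Fintype.card V →
      rhoSub G s ≤ (omegaNum (G.induce (s : Set V)) : ℝ) ^ d)
    (hd : 9 ≤ d)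
    (hsplit : 2 ≤ omegaNum G → HasCompleteSplit d G) : rho G ≤ (omegaNum G : ℝ) ^ d := by
  rcases isEmpty_or_nonempty V with _ | ⟨⟨v⟩⟩
  · rw [rho_of_isEmpty]
    positivity
  rcases le_or_gt (omegaNum G) 1 with hω | hω
  · have : 1 ≤ omegaNum G := le_omegaNum (G := G) (s := {v}) (by simp)
    exact (rho_le_one_of_omegaNum_le_one hω).trans (one_le_pow₀ (by exact_mod_cast this))
  rcases le_or_gt (rho G) 0 with hρ | hρ
  · exact hρ.trans (by positivity)
  rcases hsplit hω with ⟨X, Y, y, hy0, hy, hXY, hX, hY⟩ | ⟨k, B, hk, hB, hBρ⟩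
  · exact hXY.rho_le_omegaNum_pow hih hd hy0 hy hρ hX hY
  · exact hB.rho_le_omegaNum_pow hih hk hρ hBρ

end Induction

lemma P5Free.induce {V : Type*} {G : SimpleGraph V} (h : P5Free G) (s : Set V) :
    P5Free (G.induce s) :=
  ⟨fun e => h.false ((Embedding.induce s).comp e)⟩

theorem rho_le_omegaNum_pow_of_P5Free {d : ℕ} (hd : 9 ≤ d)
    (h : ∀ (V : Type) [Fintype V] (G : SimpleGraph V), P5Free G → 2 ≤ omegaNum G →
      HasCompleteSplit d G)
    {V : Type} [Fintype V] {G : SimpleGraph V} (hG : P5Free G) :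
    rho G ≤ (omegaNum G : ℝ) ^ d := by
  induction hn : Fintype.card V using Nat.strong_induction_on generalizing V with
  | _ n ih =>
    refine rho_le_omegaNum_pow_of_hasCompleteSplit (fun s hs => ?_) hd (h V G hG)
    exact ih _ (hn ▸ hs) (hG.induce _) (by simp)

/-- If `d ≥ 9` is such that every `P₅`-free graph `G` with `ω(G) ≥ 2` contains
one of the two structures below, then every `P₅`-free graph `G` satisfies
`α(G)·ω(G)^d ≥ |G|`. -/
theorem stmt_4 (d : ℕ) (hd : 9 ≤ d)
    (h : ∀ (V : Type) [Fintype V] (G : SimpleGraph V), P5Free G → 2 ≤ omegaNum G →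
      (∃ (X Y : Finset V) (y : ℝ), 0 < y ∧ y ≤ 1/4 ∧ CompletePair G X Y ∧
        y ^ 9 * rho G ≤ rhoSub G X ∧ (1 - 3 * y) * rho G ≤ rhoSub G Y) ∨
      (∃ (k : ℕ) (B : Fin k → Finset V), 2 ≤ k ∧ CompleteBlockade G B ∧
        ∀ i, ((k : ℝ) ^ d)⁻¹ * rho G ≤ rhoSub G (B i))) :
    ∀ (V : Type) [Fintype V] (G : SimpleGraph V), P5Free G →
      Fintype.card V ≤ alphaNum G * omegaNum G ^ d := by
  intro V _ G hG
  have hρ := rho_le_omegaNum_pow_of_P5Free hd h hG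
  exact_mod_cast card_le_alphaNum_mul_rho.trans (mul_le_mul_of_nonneg_left hρ (Nat.cast_nonneg _))
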